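/- arXiv:1502.02322 — 3 statements merged into one kernel-verified Lean document; each statement's English description precedes it below -/
import Mathlib

section
/- For any θ ∈ ℝ^d and any finite sample S = {(x_i, y_i)}_{i=1}^m with x_i ∈ ℝ^d and y_i ∈ {-1,1}, the average logistic loss equals log 2 plus (1/m) times the log of the average exponential rado-loss over all 2^m Rademacher observations: (1/m) ∑_{i=1}^m log(1 + exp(-y_i ⟨θ, x_i⟩)) = log 2 + (1/m) · log( (1/2^m) ∑_{σ ∈ {-1,1}^m} exp(-⟨θ, π_σ⟩) ), where π_σ := (1/2) ∑_{i=1}^m (σ_i + y_i) x_i. -/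
/-- Equivalence of the logistic loss over examples with the log of the average
exponential rado-loss over all `2^m` Rademacher observations. -/
theorem logistic_eq_log_exp_rado (d m : ℕ) (hm : 0 < m) (θ : Fin d → ℝ)
    (x : Fin m → Fin d → ℝ) (y : Fin m → ℝ) (hy : ∀ i, y i = 1 ∨ y i = -1) :
    (1 / (m : ℝ)) * ∑ i, Real.log (1 + Real.exp (-(y i * ∑ k, θ k * x i k)))
      = Real.log 2 + (1 / (m : ℝ)) * Real.log ((1 / 2 ^ m) *
        ∑ σ ∈ Fintype.piFinset (fun _ : Fin m => ({-1, 1} : Finset ℝ)),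
          Real.exp (-(∑ k, θ k * ((1 / 2) * ∑ i, (σ i + y i) * x i k)))) := by
  set a : Fin m → ℝ := fun i => ∑ k, θ k * x i k with ha
  have hexp : ∀ σ : Fin m → ℝ,
      (∑ k, θ k * ((1 / 2) * ∑ i, (σ i + y i) * x i k))
        = ∑ i, (1 / 2) * (σ i + y i) * a i := by
    intro σ
    simp only [Finset.mul_sum]
    rw [Finset.sum_comm]
    simp only [ha, Finset.mul_sum]
    congr 1; ext i; congr 1; ext k; ring
  have hsum : (∑ σ ∈ Fintype.piFinset (fun _ : Fin m => ({-1, 1} : Finset ℝ)),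
          Real.exp (-(∑ k, θ k * ((1 / 2) * ∑ i, (σ i + y i) * x i k))))
      = ∏ i, (1 + Real.exp (-(y i * a i))) := by
    have : ∀ σ ∈ Fintype.piFinset (fun _ : Fin m => ({-1, 1} : Finset ℝ)),
        Real.exp (-(∑ k, θ k * ((1 / 2) * ∑ i, (σ i + y i) * x i k)))
          = ∏ i, Real.exp (-((1 / 2) * (σ i + y i) * a i)) := by
      intro σ _
      rw [hexp, ← Real.exp_sum]
      congr 1
      rw [← Finset.sum_neg_distrib]
    rw [Finset.sum_congr rfl this,
      ← Finset.prod_univ_sum (t := fun _ : Fin m => ({-1, 1} : Finset ℝ))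
        (f := fun i s => Real.exp (-(1 / 2 * (s + y i) * a i)))]
    congr 1; ext i
    rw [Finset.sum_pair (by norm_num : (-1 : ℝ) ≠ 1)]
    rcases hy i with h | h <;> rw [h] <;> norm_num <;> ring_nf
  rw [hsum, Real.log_mul (by positivity)
      (by positivity), Real.log_prod (fun i _ => by positivity)]
  have h2 : Real.log ((1:ℝ) / 2 ^ m) = -(m * Real.log 2) := by
    rw [one_div, Real.log_inv, Real.log_pow]
  rw [h2]
  have hm' : (m : ℝ) ≠ 0 := Nat.cast_ne_zero.mpr hm.ne'
  field_simp
  ring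
end

section
/- Let w_t ∈ ℝ^n be a probability vector of rado weights, let σ_j ∈ {-1,1}^m for j ∈ [n], y ∈ {-1,1}^m, and feature values x_{ik} ∈ ℝ with x_{*k} := max_i |x_{ik}| > 0 and ρ_{*k} := max_j |ρ_{jk}| > 0 where ρ_{jk} := ∑_{i: σ_{ji}=y_i} y_i x_{ik}. Then there exists a probability vector w̃ ∈ ℝ^m and a constant W̃ > 0 such that (1/ρ_{*k}) ∑_j w_{tj} ρ_{jk} = W̃ · (1/x_{*k}) ∑_i w̃_i y_i x_{ik}. Consequently, for any γ > 0, |(1/ρ_{*k}) ∑_j w_{tj} ρ_{jk}| ≥ γ iff |(1/x_{*k}) ∑_i w̃_i y_i x_{ik}| ≥ γ/W̃. -/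
/-- Equivalence of the weak learning assumptions over rados and over examples:
the normalized rado edge equals `W` times a normalized example edge for some
probability vector `w̃` and constant `W > 0`. -/
theorem wla_rados_iff_examples (n m : ℕ) (w : Fin n → ℝ)
    (hw0 : ∀ j, 0 ≤ w j) (hw1 : ∑ j, w j = 1)
    (σ : Fin n → Fin m → ℝ) (hσ : ∀ j i, σ j i = 1 ∨ σ j i = -1)
    (y : Fin m → ℝ) (hy : ∀ i, y i = 1 ∨ y i = -1)
    (x : Fin m → ℝ) (xs ρs : ℝ) (ρ : Fin n → ℝ)
    (hρ : ∀ j, ρ j = ∑ i ∈ Finset.univ.filter (fun i => σ j i = y i), y i * x i)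
    (hxs : IsGreatest (Set.range fun i => |x i|) xs) (hxpos : 0 < xs)
    (hρs : IsGreatest (Set.range fun j => |ρ j|) ρs) (hρpos : 0 < ρs)
    (hW : 0 < ∑ i, ∑ j ∈ Finset.univ.filter (fun j => σ j i = y i), w j) :
    ∃ (wt : Fin m → ℝ) (W : ℝ), 0 < W ∧ (∀ i, 0 ≤ wt i) ∧ (∑ i, wt i = 1) ∧
      (1 / ρs) * ∑ j, w j * ρ j = W * ((1 / xs) * ∑ i, wt i * y i * x i) ∧
      ∀ γ : ℝ, 0 < γ →
        (γ ≤ |(1 / ρs) * ∑ j, w j * ρ j| ↔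
          γ / W ≤ |(1 / xs) * ∑ i, wt i * y i * x i|) := by
  set S : ℝ := ∑ i, ∑ j ∈ Finset.univ.filter (fun j => σ j i = y i), w j with hS
  refine ⟨fun i => (∑ j ∈ Finset.univ.filter (fun j => σ j i = y i), w j) / S,
    S * xs / ρs, ?_, ?_, ?_, ?_, ?_⟩
  · positivity
  · intro i
    have : 0 ≤ ∑ j ∈ Finset.univ.filter (fun j => σ j i = y i), w j :=
      Finset.sum_nonneg fun j _ => hw0 j
    positivity
  · rw [← Finset.sum_div, ← hS, div_self hW.ne']
  · have key : ∑ j, w j * ρ j =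
        ∑ i, (∑ j ∈ Finset.univ.filter (fun j => σ j i = y i), w j) * (y i * x i) := by
      simp only [hρ, Finset.mul_sum, Finset.sum_filter, Finset.sum_mul]
      rw [Finset.sum_comm]
      refine Finset.sum_congr rfl fun i _ => Finset.sum_congr rfl fun j _ => ?_
      by_cases h : σ j i = y i <;> simp [h]
    have h2 : ∑ i, (∑ j ∈ Finset.univ.filter (fun j => σ j i = y i), w j) / S * y i * x i
        = (∑ i, (∑ j ∈ Finset.univ.filter (fun j => σ j i = y i), w j) * (y i * x i)) / S := by
      rw [Finset.sum_div]
      exact Finset.sum_congr rfl fun i _ => by ring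
    rw [key, h2]
    field_simp
  · have key : ∑ j, w j * ρ j =
        ∑ i, (∑ j ∈ Finset.univ.filter (fun j => σ j i = y i), w j) * (y i * x i) := by
      simp only [hρ, Finset.mul_sum, Finset.sum_filter, Finset.sum_mul]
      rw [Finset.sum_comm]
      refine Finset.sum_congr rfl fun i _ => Finset.sum_congr rfl fun j _ => ?_
      by_cases h : σ j i = y i <;> simp [h]
    have h2 : ∑ i, (∑ j ∈ Finset.univ.filter (fun j => σ j i = y i), w j) / S * y i * x i
        = (∑ i, (∑ j ∈ Finset.univ.filter (fun j => σ j i = y i), w j) * (y i * x i)) / S := by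
      rw [Finset.sum_div]
      exact Finset.sum_congr rfl fun i _ => by ring
    have hE : (1 / ρs) * ∑ j, w j * ρ j =
        (S * xs / ρs) * ((1 / xs) * ∑ i,
          (∑ j ∈ Finset.univ.filter (fun j => σ j i = y i), w j) / S * y i * x i) := by
      rw [key, h2]; field_simp
    have gen : ∀ (a b Wc : ℝ), 0 < Wc → a = Wc * b → ∀ γ : ℝ, 0 < γ →
        (γ ≤ |a| ↔ γ / Wc ≤ |b|) := by
      rintro a b Wc hWc rfl γ _
      rw [abs_mul, abs_of_pos hWc, div_le_iff₀ hWc, mul_comm]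
    exact fun γ hγ => gen _ _ _ (by positivity) hE γ hγ
end

section
/- Define f(z) := (2/(1-2z))·( log 2 + (1-z)·log(1-z) + z·log z ) for z ∈ (0, 1/2). Then for all z ∈ (0, 1/2): exp(-f(z)) ≤ exp(2z - 1), equivalently f(z) ≥ 1 - 2z. -/
open Real Set

private lemma log_deriv1 {x : ℝ} (h1p : (0:ℝ) < 1 + x) :
    HasDerivAt (fun u : ℝ => Real.log (1 + u)) (1 / (1 + x)) x := by
  have := (Real.hasDerivAt_log h1p.ne').comp x ((hasDerivAt_id x).const_add 1)
  simpa [one_div, Function.comp_def] using this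

private lemma log_deriv2 {x : ℝ} (h1m : (0:ℝ) < 1 - x) :
    HasDerivAt (fun u : ℝ => Real.log (1 - u)) ((-1) / (1 - x)) x := by
  have := (Real.hasDerivAt_log h1m.ne').comp x ((hasDerivAt_id x).neg.const_add 1)
  simpa [div_eq_mul_inv, mul_comm, Function.comp_def] using this

private lemma F_deriv {x : ℝ} (h1p : (0:ℝ) < 1 + x) (h1m : (0:ℝ) < 1 - x) :
    HasDerivAt (fun u : ℝ => Real.log (1 + u) - Real.log (1 - u) - 2 * u)
      (1 / (1 + x) - (-1) / (1 - x) - 2) x :=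
  ((log_deriv1 h1p).sub (log_deriv2 h1m)).sub
    (((hasDerivAt_id x).const_mul 2).congr_deriv (by ring))

private lemma G_deriv {x : ℝ} (h1p : (0:ℝ) < 1 + x) (h1m : (0:ℝ) < 1 - x) :
    HasDerivAt
      (fun u : ℝ => (1 + u) * Real.log (1 + u) + (1 - u) * Real.log (1 - u) - u ^ 2)
      ((1 * Real.log (1 + x) + (1 + x) * (1 / (1 + x)))
        + ((-1) * Real.log (1 - x) + (1 - x) * ((-1) / (1 - x))) - 2 * x) x := by
  have g1 : HasDerivAt (fun u : ℝ => (1 + u) * Real.log (1 + u))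
      (1 * Real.log (1 + x) + (1 + x) * (1 / (1 + x))) x :=
    HasDerivAt.mul ((hasDerivAt_id x).const_add 1) (log_deriv1 h1p)
  have g2 : HasDerivAt (fun u : ℝ => (1 - u) * Real.log (1 - u))
      ((-1) * Real.log (1 - x) + (1 - x) * ((-1) / (1 - x))) x :=
    HasDerivAt.mul ((hasDerivAt_id x).neg.const_add 1) (log_deriv2 h1m)
  exact (g1.add g2).sub ((hasDerivAt_pow 2 x).congr_deriv (by ring))

private lemma pos_of_mem {x : ℝ} (hx : x ∈ interior (Set.Ico (0:ℝ) 1)) :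
    (0:ℝ) < 1 + x ∧ (0:ℝ) < 1 - x ∧ 0 < x := by
  rw [interior_Ico] at hx
  exact ⟨by linarith [hx.1], by linarith [hx.2], hx.1⟩

lemma artanh_aux : ∀ u ∈ Set.Ico (0:ℝ) 1,
    2 * u ≤ Real.log (1 + u) - Real.log (1 - u) := by
  have hmono : MonotoneOn (fun u : ℝ => Real.log (1 + u) - Real.log (1 - u) - 2 * u)
      (Set.Ico (0:ℝ) 1) := by
    refine monotoneOn_of_deriv_nonneg (convex_Ico 0 1) ?_ ?_ ?_
    · apply ContinuousOn.sub
      apply ContinuousOn.sub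
      · exact (Real.continuousOn_log.comp (by fun_prop)
          (fun x hx => by simp only [mem_Ico] at hx; intro h; simp at h; linarith [hx.1]))
      · exact (Real.continuousOn_log.comp (by fun_prop)
          (fun x hx => by simp only [mem_Ico] at hx; intro h; simp at h; linarith [hx.2]))
      · fun_prop
    · intro x hx
      obtain ⟨h1p, h1m, _⟩ := pos_of_mem hx
      exact (F_deriv h1p h1m).differentiableAt.differentiableWithinAt
    · intro x hx
      obtain ⟨h1p, h1m, h0⟩ := pos_of_mem hx
      rw [(F_deriv h1p h1m).deriv]
      rw [div_sub_div _ _ h1p.ne' h1m.ne', sub_nonneg, le_div_iff₀ (by positivity)]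
      nlinarith
  intro u hu
  have := hmono (by simp) hu hu.1
  simp only [Real.log_one, sub_zero, add_zero, mul_zero] at this
  nlinarith [this]

lemma pinsker_aux : ∀ u ∈ Set.Ico (0:ℝ) 1,
    u ^ 2 ≤ (1 + u) * Real.log (1 + u) + (1 - u) * Real.log (1 - u) := by
  have hmono : MonotoneOn
      (fun u : ℝ => (1 + u) * Real.log (1 + u) + (1 - u) * Real.log (1 - u) - u ^ 2)
      (Set.Ico (0:ℝ) 1) := by
    refine monotoneOn_of_deriv_nonneg (convex_Ico 0 1) ?_ ?_ ?_
    · apply ContinuousOn.sub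
      apply ContinuousOn.add
      · exact (by fun_prop : ContinuousOn (fun u:ℝ => 1+u) _).mul
          (Real.continuousOn_log.comp (by fun_prop)
          (fun x hx => by simp only [mem_Ico] at hx; intro h; simp at h; linarith [hx.1]))
      · exact (by fun_prop : ContinuousOn (fun u:ℝ => 1-u) _).mul
          (Real.continuousOn_log.comp (by fun_prop)
          (fun x hx => by simp only [mem_Ico] at hx; intro h; simp at h; linarith [hx.2]))
      · fun_prop
    · intro x hx
      obtain ⟨h1p, h1m, _⟩ := pos_of_mem hx
      exact (G_deriv h1p h1m).differentiableAt.differentiableWithinAt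
    · intro x hx
      obtain ⟨h1p, h1m, h0⟩ := pos_of_mem hx
      rw [(G_deriv h1p h1m).deriv]
      have key := artanh_aux x ⟨h0.le, by rw [interior_Ico] at hx; exact hx.2⟩
      have e1 : (1 + x) * (1 / (1 + x)) = 1 := mul_one_div_cancel h1p.ne'
      have e2 : (1 - x) * ((-1) / (1 - x)) = -1 := by field_simp
      rw [e1, e2]
      linarith
  intro u hu
  have := hmono (by simp) hu hu.1
  simp only [add_zero, sub_zero, Real.log_one, mul_zero] at this
  nlinarith [this]

/-- The bit-entropy-divergence function `f(z) = (2/(1-2z))·D_BE(1-z‖1/2)`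
satisfies `exp(-f z) ≤ exp(2z-1)`, equivalently `f z ≥ 1 - 2z`, on `(0,1/2)`. -/
theorem bit_entropy_tangent_bound :
    ∀ z ∈ Set.Ioo (0 : ℝ) (1 / 2),
      Real.exp (-((2 / (1 - 2 * z)) *
          (Real.log 2 + (1 - z) * Real.log (1 - z) + z * Real.log z)))
        ≤ Real.exp (2 * z - 1) ∧
      1 - 2 * z ≤ (2 / (1 - 2 * z)) *
          (Real.log 2 + (1 - z) * Real.log (1 - z) + z * Real.log z) := by
  intro z hz
  obtain ⟨hz0, hz1⟩ := hz
  have hu0 : 0 < 1 - 2 * z := by linarith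
  have hu1 : 1 - 2 * z < 1 := by linarith
  have key := pinsker_aux (1 - 2 * z) ⟨hu0.le, hu1⟩
  have e1 : Real.log (1 + (1 - 2 * z)) = Real.log 2 + Real.log (1 - z) := by
    rw [show (1:ℝ) + (1 - 2 * z) = 2 * (1 - z) by ring,
        Real.log_mul two_ne_zero (by linarith)]
  have e2 : Real.log (1 - (1 - 2 * z)) = Real.log 2 + Real.log z := by
    rw [show (1:ℝ) - (1 - 2 * z) = 2 * z by ring,
        Real.log_mul two_ne_zero hz0.ne']
  rw [e1, e2] at key
  have hD : (1 - 2 * z) ^ 2 / 2 ≤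
      Real.log 2 + (1 - z) * Real.log (1 - z) + z * Real.log z := by nlinarith [key]
  have hmain : 1 - 2 * z ≤ (2 / (1 - 2 * z)) *
      (Real.log 2 + (1 - z) * Real.log (1 - z) + z * Real.log z) := by
    rw [div_mul_eq_mul_div, le_div_iff₀ hu0]
    nlinarith [hD]
  exact ⟨Real.exp_le_exp.mpr (by linarith), hmain⟩
end
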